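/- Let n ≥ 4, k ≥ 1, and φ(r) = ∑_{j=0}^{k} r^{2j+1}/(2j+1)!. Then for all r > 0, the quantity (n−3)φ'(r)((φ'(r))² − φ(r)φ''(r)) + φ(r)(φ'(r)φ''(r) − φ(r)φ'''(r)) is strictly positive. -/

import Mathlib

/-!
With `ψ_k(r) = ∑_{j ≤ k} r^{2j}/(2j)!` we have `φ_k' = ψ_k` and `ψ_{k+1}' = φ_k`, so both brackets
are expressions in `φ_{k+1}, ψ_{k+1}, φ_k, ψ_k`. The second, `φ_k ψ_{k+1} - ψ_k φ_{k+1}`, collapses to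
`φ_k · r^{2k+2}/(2k+2)! - ψ_k · r^{2k+3}/(2k+3)!`, a sum of positive terms since
`r^{m+1}/(m+1)! = r^m/m! · r/(m+1)` and `r/(m+1) < r/(i+1)` for `i < m`. The first,
`ψ_{k+1}² - φ_{k+1} φ_k`, equals `1` at `r = 0` and has the second as its derivative.
-/

noncomputable def phi (k : ℕ) (r : ℝ) : ℝ :=
  ∑ j ∈ Finset.range (k + 1), r ^ (2 * j + 1) / (Nat.factorial (2 * j + 1) : ℝ)

open Finset Nat

noncomputable def psi (k : ℕ) (r : ℝ) : ℝ :=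
  ∑ j ∈ range (k + 1), r ^ (2 * j) / ((2 * j)! : ℝ)

lemma pow_succ_div_factorial_succ (m : ℕ) (r : ℝ) :
    r ^ (m + 1) / ((m + 1)! : ℝ) = r ^ m / (m ! : ℝ) * (r / (m + 1)) := by
  rw [factorial_succ]
  push_cast
  field_simp
  ring

lemma hasDerivAt_pow_succ_div_factorial (m : ℕ) (r : ℝ) :
    HasDerivAt (fun x : ℝ => x ^ (m + 1) / ((m + 1)! : ℝ)) (r ^ m / (m ! : ℝ)) r := by
  refine ((hasDerivAt_pow (m + 1) r).div_const _).congr_deriv ?_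
  rw [factorial_succ]
  push_cast
  field_simp

lemma pow_div_factorial_mul_lt {i m : ℕ} (him : i < m) {r : ℝ} (hr : 0 < r) :
    r ^ i / (i ! : ℝ) * (r ^ (m + 1) / ((m + 1)! : ℝ))
      < r ^ (i + 1) / ((i + 1)! : ℝ) * (r ^ m / (m ! : ℝ)) := by
  rw [pow_succ_div_factorial_succ, pow_succ_div_factorial_succ, ← mul_assoc,
    mul_right_comm _ (r / _)]
  gcongr

-- The exponents are written `(2 * j + 1) + 1` so that `hasDerivAt_pow_succ_div_factorial` applies.
lemma psi_succ (k : ℕ) :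
    psi (k + 1) = fun r => 1 + ∑ j ∈ range (k + 1), r ^ (2 * j + 1 + 1) / ((2 * j + 1 + 1)! : ℝ) := by
  funext r
  rw [psi, sum_range_succ', add_comm]
  simp [mul_add]

lemma hasDerivAt_phi (k : ℕ) (r : ℝ) : HasDerivAt (phi k) (psi k r) r :=
  HasDerivAt.fun_sum fun j _ => hasDerivAt_pow_succ_div_factorial (2 * j) r

lemma hasDerivAt_psi_succ (k : ℕ) (r : ℝ) : HasDerivAt (psi (k + 1)) (phi k r) r := by
  rw [psi_succ, phi, ← zero_add (∑ j ∈ _, _)]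
  exact (hasDerivAt_const r 1).add
    (HasDerivAt.fun_sum fun j _ => hasDerivAt_pow_succ_div_factorial (2 * j + 1) r)

lemma phi_zero (k : ℕ) : phi k 0 = 0 := by
  simp [phi]

lemma psi_zero (k : ℕ) : psi k 0 = 1 := by
  simp [psi, sum_range_succ']

lemma phi_pos (k : ℕ) {r : ℝ} (hr : 0 < r) : 0 < phi k r :=
  sum_pos (fun j _ => by positivity) nonempty_range_add_one

lemma psi_pos (k : ℕ) {r : ℝ} (hr : 0 ≤ r) : 0 < psi k r := by
  rw [psi, sum_range_succ']
  simp only [mul_zero, pow_zero, factorial_zero, cast_one, div_one]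
  exact add_pos_of_nonneg_of_pos (sum_nonneg fun j _ => by positivity) one_pos

lemma psi_mul_phi_succ_lt (k : ℕ) {r : ℝ} (hr : 0 < r) :
    psi k r * phi (k + 1) r < phi k r * psi (k + 1) r := by
  have top_terms_lt : psi k r * (r ^ (2 * (k + 1) + 1) / ((2 * (k + 1) + 1)! : ℝ))
      < phi k r * (r ^ (2 * (k + 1)) / ((2 * (k + 1))! : ℝ)) := by
    rw [phi, psi, sum_mul, sum_mul]
    refine sum_lt_sum_of_nonempty nonempty_range_add_one fun j hj => ?_
    refine pow_div_factorial_mul_lt ?_ hr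
    have := mem_range.mp hj
    omega
  have hphi : phi (k + 1) r = phi k r + r ^ (2 * (k + 1) + 1) / ((2 * (k + 1) + 1)! : ℝ) :=
    sum_range_succ _ _
  have hpsi : psi (k + 1) r = psi k r + r ^ (2 * (k + 1)) / ((2 * (k + 1))! : ℝ) :=
    sum_range_succ _ _
  rw [hphi, hpsi]
  linarith [top_terms_lt]

lemma phi_succ_mul_phi_lt_sq (k : ℕ) {r : ℝ} (hr : 0 < r) :
    phi (k + 1) r * phi k r < psi (k + 1) r ^ 2 := by
  set F : ℝ → ℝ := fun r => psi (k + 1) r ^ 2 - phi (k + 1) r * phi k r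
  have hF : ∀ x, HasDerivAt F (phi k x * psi (k + 1) x - psi k x * phi (k + 1) x) x := fun x =>
    (((hasDerivAt_psi_succ k x).pow 2).sub
      ((hasDerivAt_phi (k + 1) x).mul (hasDerivAt_phi k x))).congr_deriv (by ring)
  have hmono : StrictMonoOn F (Set.Ici 0) := by
    refine strictMonoOn_of_deriv_pos (convex_Ici 0)
      (fun x _ => (hF x).continuousAt.continuousWithinAt) fun x hx => ?_
    rw [interior_Ici] at hx
    rw [(hF x).deriv, sub_pos]
    exact psi_mul_phi_succ_lt k hx
  have hF0 : F 0 = 1 := by simp [F, psi_zero, phi_zero]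
  have hF_lt := hmono Set.self_mem_Ici hr.le hr
  simp only [hF0, F] at hF_lt
  linarith

theorem stmt_5 (n k : ℕ) (hn : 4 ≤ n) (hk : 1 ≤ k) :
    ∀ r : ℝ, 0 < r →
      0 < ((n : ℝ) - 3) * deriv (phi k) r *
            ((deriv (phi k) r) ^ 2 - phi k r * deriv (deriv (phi k)) r)
          + phi k r *
            (deriv (phi k) r * deriv (deriv (phi k)) r
              - phi k r * deriv (deriv (deriv (phi k))) r) := by
  intro r hr
  obtain ⟨k, rfl⟩ : ∃ m, k = m + 1 := ⟨k - 1, by omega⟩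
  have deriv_phi (m : ℕ) : deriv (phi m) = psi m := funext fun x => (hasDerivAt_phi m x).deriv
  have deriv_psi : deriv (psi (k + 1)) = phi k := funext fun x => (hasDerivAt_psi_succ k x).deriv
  rw [deriv_phi, deriv_psi, deriv_phi]
  have hn3 : (0 : ℝ) < n - 3 := by
    rw [sub_pos]
    exact_mod_cast hn
  exact add_pos
    (mul_pos (mul_pos hn3 (psi_pos _ hr.le)) (sub_pos.mpr (phi_succ_mul_phi_lt_sq k hr)))
    (mul_pos (phi_pos _ hr) (sub_pos.mpr (by linarith [psi_mul_phi_succ_lt k hr])))
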